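/- arXiv:1805.00109 — 6 statements merged into one kernel-verified Lean document; each statement's English description precedes it below -/
import Mathlib

section
/- Let T > 0, σ > 0, S₀ > 0, K > 0, r ∈ ℝ, and let W be a real random variable distributed according to the Gaussian measure with mean 0 and variance T. Then the risk-neutral price of the European call option satisfies the Black–Scholes–Merton formula: e^{−rT} · E[ max(0, S₀·exp(σ·W + (r − σ²/2)·T) − K) ] = S₀·Φ(d₁) − K·e^{−rT}·Φ(d₂), where d₁ = (1/(σ√T))·(log(S₀/K) + (r + σ²/2)·T) and d₂ = d₁ − σ√T. -/
open MeasureTheory ProbabilityTheory Real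

/-- The standard normal cumulative distribution function
`Φ(x) = (1/√(2π)) ∫_{-∞}^x e^{-y²/2} dy`. -/
noncomputable def stdNormalCDF (x : ℝ) : ℝ :=
  (Real.sqrt (2 * Real.pi))⁻¹ * ∫ y in Set.Iic x, Real.exp (-y ^ 2 / 2)

open scoped NNReal

/-! The substitution `x = σ w + (r - σ²/2) T + log S₀` turns the payoff into `(eˣ - K)⁺` with
`x ~ N(m, v)`, `m = (r - σ²/2) T + log S₀`, `v = σ² T`. The payoff vanishes for `x < log K`; on
`x ≥ log K` the factor `eˣ` is absorbed by exponential tilting,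
`φ_{m,v}(x) eˣ = e^{m + v/2} φ_{m+v,v}(x)`, so both terms become Gaussian tail probabilities,
which standardisation expresses through `Φ`; finally `e^{m + v/2} = S₀ e^{rT}`, so discounting
leaves `S₀`. -/

lemma gaussianPDFReal_mul_exp (m : ℝ) (v : ℝ≥0) (x : ℝ) :
    gaussianPDFReal m v x * exp x = exp (m + v / 2) * gaussianPDFReal (m + v) v x := by
  rcases eq_or_ne v 0 with rfl | hv
  · simp
  have hv' : (v : ℝ) ≠ 0 := by exact_mod_cast hv
  have hexp : -(x - m) ^ 2 / (2 * v) + x = m + v / 2 + -(x - (m + v)) ^ 2 / (2 * v) := by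
    field_simp
    ring
  simp only [gaussianPDFReal]
  rw [mul_assoc, ← exp_add, hexp, exp_add]
  ring

lemma setIntegral_gaussianPDFReal (m : ℝ) {v : ℝ≥0} (hv : v ≠ 0) (s : Set ℝ) :
    ∫ x in s, gaussianPDFReal m v x = (gaussianReal m v).real s := by
  rw [measureReal_def, gaussianReal_apply_eq_integral m hv,
    ENNReal.toReal_ofReal (integral_nonneg fun x => gaussianPDFReal_nonneg m v x)]

lemma stdNormalCDF_eq_gaussianReal (x : ℝ) :
    stdNormalCDF x = (gaussianReal 0 1).real (Set.Iic x) := by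
  rw [← setIntegral_gaussianPDFReal 0 one_ne_zero, stdNormalCDF, ← integral_const_mul]
  simp [gaussianPDFReal]

lemma gaussianReal_real_Ici (m : ℝ) {v : ℝ≥0} (hv : v ≠ 0) (b : ℝ) :
    (gaussianReal m v).real (Set.Ici b) = stdNormalCDF ((m - b) / √v) := by
  have hsv : 0 < √(v : ℝ) := Real.sqrt_pos.2 (by positivity)
  have hstd : (gaussianReal m v).map (fun x => (m - x) / √v) = gaussianReal 0 1 := by
    rw [show (fun x => (m - x) / √v) = (· / √v) ∘ (m - ·) from rfl,
      ← Measure.map_map (by fun_prop) (by fun_prop), gaussianReal_map_const_sub,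
      gaussianReal_map_div_const]
    congr 1
    · simp
    · ext; simp [Real.sq_sqrt, hv]
  have hpre : (fun x => (m - x) / √v) ⁻¹' Set.Iic ((m - b) / √v) = Set.Ici b := by
    ext x
    simp only [Set.mem_preimage, Set.mem_Iic, Set.mem_Ici, div_le_div_iff_of_pos_right hsv]
    constructor <;> intro <;> linarith
  rw [stdNormalCDF_eq_gaussianReal, ← hstd, map_measureReal_apply (by fun_prop) measurableSet_Iic,
    hpre]

lemma setIntegral_exp_gaussianReal (m : ℝ) {v : ℝ≥0} (hv : v ≠ 0) (s : Set ℝ) :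
    ∫ x in s, exp x ∂gaussianReal m v = exp (m + v / 2) * (gaussianReal (m + v) v).real s := by
  rw [gaussianReal_of_var_ne_zero m hv, setIntegral_withDensity_eq_setIntegral_toReal_smul' s
    (measurable_gaussianPDF m v) (ae_of_all _ fun _ => gaussianPDF_lt_top)]
  simp only [toReal_gaussianPDF, smul_eq_mul, gaussianPDFReal_mul_exp]
  rw [integral_const_mul, setIntegral_gaussianPDFReal _ hv]

lemma integral_max_zero_exp_sub_gaussianReal (m : ℝ) {v : ℝ≥0} (hv : v ≠ 0) {K : ℝ} (hK : 0 < K) :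
    ∫ x, max 0 (exp x - K) ∂gaussianReal m v
      = exp (m + v / 2) * stdNormalCDF ((m + v - log K) / √v)
        - K * stdNormalCDF ((m - log K) / √v) := by
  have hpayoff : (fun x => max 0 (exp x - K)) = (Set.Ici (log K)).indicator (exp · - K) := by
    ext x
    by_cases hx : log K ≤ x
    · rw [Set.indicator_of_mem (Set.mem_Ici.2 hx),
        max_eq_right (sub_nonneg.2 ((log_le_iff_le_exp hK).1 hx))]
    · rw [Set.indicator_of_notMem (mt Set.mem_Ici.1 hx), max_eq_left]
      exact sub_nonpos.2 ((lt_log_iff_exp_lt hK).1 (not_le.1 hx)).le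
  rw [hpayoff, integral_indicator measurableSet_Ici,
    integral_sub (integrable_exp_mul_gaussianReal (t := 1) |>.integrableOn |>.congr_fun
      (fun x _ => by simp) measurableSet_Ici) (integrable_const K),
    setIntegral_exp_gaussianReal m hv, setIntegral_const, gaussianReal_real_Ici _ hv,
    gaussianReal_real_Ici _ hv, smul_eq_mul, mul_comm K]

lemma gaussianReal_map_mul_add (m : ℝ) (v : ℝ≥0) (a c : ℝ) :
        (gaussianReal m v).map (fun x => a * x + c)
      = gaussianReal (a * m + c) (.mk (a ^ 2) (sq_nonneg a) * v) := by
  rw [show (fun x => a * x + c) = (· + c) ∘ (a * ·) from rfl,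
    ← Measure.map_map (by fun_prop) (by fun_prop), gaussianReal_map_const_mul,
    gaussianReal_map_add_const]

lemma integral_comp_mul_add_gaussianReal {E : Type*} [NormedAddCommGroup E] [NormedSpace ℝ E]
    (m : ℝ) (v : ℝ≥0) {a : ℝ} (ha : a ≠ 0) (c : ℝ) (f : ℝ → E) :
    ∫ x, f (a * x + c) ∂gaussianReal m v
      = ∫ y, f y ∂gaussianReal (a * m + c) (.mk (a ^ 2) (sq_nonneg a) * v) := by
  have hφ : MeasurableEmbedding (fun x => a * x + c) :=
    ((Homeomorph.mulLeft₀ a ha).trans (Homeomorph.addRight c)).measurableEmbedding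
  rw [← hφ.integral_map, gaussianReal_map_mul_add]

/-- The Black–Scholes–Merton formula: the risk-neutral price of the European call option
equals `S₀ Φ(d₁) - K e^{-rT} Φ(d₂)`. -/
theorem bsm_european_call_price (T : NNReal) (hT : 0 < T) (σ S₀ K r : ℝ)
    (hσ : 0 < σ) (hS₀ : 0 < S₀) (hK : 0 < K) :
    Real.exp (-r * T) *
        ∫ w, max 0 (S₀ * Real.exp (σ * w + (r - σ ^ 2 / 2) * T) - K) ∂(gaussianReal 0 T)
      = S₀ * stdNormalCDF ((1 / (σ * Real.sqrt T)) *
            (Real.log (S₀ / K) + (r + σ ^ 2 / 2) * T))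
        - K * Real.exp (-r * T) * stdNormalCDF ((1 / (σ * Real.sqrt T)) *
            (Real.log (S₀ / K) + (r + σ ^ 2 / 2) * T) - σ * Real.sqrt T) := by
  set t : ℝ := (T : ℝ)
  set m : ℝ := (r - σ ^ 2 / 2) * t + log S₀
  set v : ℝ≥0 := .mk (σ ^ 2) (sq_nonneg σ) * T
  have hv : (v : ℝ) = σ ^ 2 * t := rfl
  have hv0 : v ≠ 0 := by rw [← NNReal.coe_ne_zero, hv]; positivity
  have hsqrt_v : √(v : ℝ) = σ * √t := by
    rw [hv, Real.sqrt_mul (sq_nonneg σ), Real.sqrt_sq hσ.le]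
  have hpayoff (w : ℝ) : S₀ * exp (σ * w + (r - σ ^ 2 / 2) * t) = exp (σ * w + m) := by
    rw [← add_assoc, exp_add _ (log S₀), exp_log hS₀, mul_comm]
  have hd₁ : (m + v - log K) / √(v : ℝ)
      = 1 / (σ * √t) * (log (S₀ / K) + (r + σ ^ 2 / 2) * t) := by
    rw [hsqrt_v, hv, log_div hS₀.ne' hK.ne']
    field_simp
    ring
  have hd₂ : (m - log K) / √(v : ℝ)
      = 1 / (σ * √t) * (log (S₀ / K) + (r + σ ^ 2 / 2) * t) - σ * √t := by
    rw [← hd₁, ← hsqrt_v]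
    field_simp
    rw [Real.sq_sqrt v.coe_nonneg]
    ring
  have hdiscount : exp (-r * t) * exp (m + v / 2) = S₀ := by
    rw [← exp_add, hv, show -r * t + (m + σ ^ 2 * t / 2) = log S₀ by ring, exp_log hS₀]
  simp_rw [hpayoff]
  rw [integral_comp_mul_add_gaussianReal 0 T hσ.ne' m (fun y => max 0 (exp y - K)),
    mul_zero, zero_add, integral_max_zero_exp_sub_gaussianReal m hv0 hK, hd₁, hd₂, mul_sub,
    ← mul_assoc, hdiscount]
  ring
end

section
/- Let T > 0, σ > 0, S₀ > 0, K > 0, r ∈ ℝ, and let W be a real random variable distributed according to the Gaussian measure with mean 0 and variance T. Let S_T = S₀·exp(σ·W + (r − σ²/2)·T). Then the second moment of the European call payoff satisfies E[ (max(0, S_T − K))² ] = e^{(2r + σ²)T}·S₀²·Φ(d₃) − 2K·e^{rT}·S₀·Φ(d₁) + K²·Φ(d₂), where d₁ = (1/(σ√T))·(log(S₀/K) + (r + σ²/2)·T), d₂ = d₁ − σ√T, and d₃ = (1/(σ√T))·(log(S₀/K) + (r + 3σ²/2)·T). -/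
open MeasureTheory ProbabilityTheory Real

open Set
open scoped ENNReal NNReal

lemma shift_Iic (f : ℝ → ℝ) (a d : ℝ) :
    ∫ x in Iic a, f (x + d) = ∫ x in Iic (a + d), f x := by
  have A : MeasurableEmbedding (fun x : ℝ => x + d) :=
    (Homeomorph.addRight d).measurableEmbedding
  have h := A.setIntegral_map (μ := volume) (g := f) (s := Iic (a + d))
  rw [map_add_right_eq_self] at h
  have hpre : (fun x : ℝ => x + d) ⁻¹' Iic (a + d) = Iic a := by
    ext x; simp
  rw [hpre] at h
  exact h.symm

lemma even_flip (f : ℝ → ℝ) (hf : ∀ x, f (-x) = f x) (c : ℝ) :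
    ∫ x in Ioi c, f x = ∫ x in Iic (-c), f x := by
  rw [← integral_comp_neg_Ioi c f]
  simp_rw [hf]

lemma pdf_setIntegral (T : NNReal) (hT : 0 < T) (m c : ℝ) :
    ∫ w in Ici c, gaussianPDFReal m T w = stdNormalCDF ((m - c) / Real.sqrt T) := by
  have hT' : (0:ℝ) < T := hT
  have hsT : (0:ℝ) < Real.sqrt T := Real.sqrt_pos.mpr hT'
  unfold gaussianPDFReal
  rw [integral_Ici_eq_integral_Ioi]
  have step1 : ∫ w in Ioi c, (√(2 * π * T))⁻¹ * rexp (-(w - m)^2 / (2 * T))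
      = ∫ x in Iic (-c), (√(2 * π * T))⁻¹ * rexp (-(x + m)^2 / (2 * T)) := by
    rw [← integral_comp_neg_Ioi c (fun x => (√(2 * π * (T:ℝ)))⁻¹ * rexp (-(x + m)^2 / (2 * T)))]
    refine setIntegral_congr_fun measurableSet_Ioi fun w _ => ?_
    congr 1
    ring
  rw [step1, shift_Iic (fun x => (√(2 * π * T))⁻¹ * rexp (-x^2 / (2 * T))) (-c) m]
  have step3 : ∫ x in Iic (-c + m), (√(2 * π * T))⁻¹ * rexp (-x^2 / (2 * T))
      = ∫ x in Ioi (c - m), (√(2 * π * T))⁻¹ * rexp (-x^2 / (2 * T)) := by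
    rw [even_flip _ (fun x => by ring_nf) (c - m), neg_sub]
    ring_nf
  rw [step3]
  have step4 : ∫ x in Ioi ((c - m) / Real.sqrt T),
        (√(2 * π * T))⁻¹ * rexp (-(Real.sqrt T * x)^2 / (2 * T))
      = (Real.sqrt T)⁻¹ • ∫ x in Ioi (c - m), (√(2 * π * T))⁻¹ * rexp (-x^2 / (2 * T)) := by
    have := integral_comp_mul_left_Ioi
      (fun x => (√(2 * π * T))⁻¹ * rexp (-x^2 / (2 * T))) ((c - m) / Real.sqrt T) hsT
    rw [mul_div_cancel₀ _ hsT.ne'] at this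
    exact this
  have step4' : ∫ x in Ioi (c - m), (√(2 * π * T))⁻¹ * rexp (-x^2 / (2 * T))
      = Real.sqrt T * ∫ x in Ioi ((c - m) / Real.sqrt T),
          (√(2 * π * T))⁻¹ * rexp (-x^2 / 2) := by
    have heq : ∀ x : ℝ, -(Real.sqrt T * x)^2 / (2 * T) = -x^2 / 2 := by
      intro x
      rw [mul_pow, Real.sq_sqrt hT'.le]
      field_simp
    simp_rw [heq] at step4
    rw [step4, smul_eq_mul, ← mul_assoc, mul_inv_cancel₀ hsT.ne', one_mul]
  rw [step4']
  have step5 : ∫ x in Ioi ((c - m) / Real.sqrt T), (√(2 * π * T))⁻¹ * rexp (-x^2 / 2)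
      = ∫ x in Iic ((m - c) / Real.sqrt T), (√(2 * π * T))⁻¹ * rexp (-x^2 / 2) := by
    rw [even_flip _ (fun x => by ring_nf) _, ← neg_div, neg_sub]
  rw [step5]
  rw [MeasureTheory.integral_const_mul, stdNormalCDF]
  have : Real.sqrt (2 * π * T) = Real.sqrt (2 * π) * Real.sqrt T := Real.sqrt_mul (by positivity) _
  rw [this, mul_inv]
  field_simp

lemma pdf_mul_exp (T : NNReal) (hT : 0 < T) (a w : ℝ) :
    gaussianPDFReal 0 T w * rexp (a * w)
      = rexp (a ^ 2 * T / 2) * gaussianPDFReal (a * T) T w := by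
  have h0 : (T:ℝ) ≠ 0 := (show (0:ℝ) < T from hT).ne'
  unfold gaussianPDFReal
  rw [mul_assoc, ← Real.exp_add,
    show rexp (a ^ 2 * (T:ℝ) / 2) * ((√(2 * π * (T:ℝ)))⁻¹ * rexp (-(w - a * T) ^ 2 / (2 * T)))
        = (√(2 * π * (T:ℝ)))⁻¹ * rexp (a ^ 2 * T / 2 + -(w - a * T) ^ 2 / (2 * T)) from by
      rw [Real.exp_add]; ring]
  congr 1
  field_simp
  ring

lemma integrable_exp_gauss (T : NNReal) (hT : 0 < T) (a : ℝ) :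
    Integrable (fun w => rexp (a * w)) (gaussianReal 0 T) := by
  rw [gaussianReal_of_var_ne_zero 0 hT.ne',
    integrable_withDensity_iff (measurable_gaussianPDF 0 T)
      (ae_of_all _ fun x => ENNReal.ofReal_lt_top)]
  have : (fun x => rexp (a * x) * (gaussianPDF 0 T x).toReal)
      = fun x => rexp (a ^ 2 * T / 2) * gaussianPDFReal (a * T) T x := by
    ext x
    rw [gaussianPDF, ENNReal.toReal_ofReal (gaussianPDFReal_nonneg 0 T x), mul_comm,
      pdf_mul_exp T hT]
  rw [this]
  exact (integrable_gaussianPDFReal (a * T) T).const_mul _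

lemma gauss_setIntegral (T : NNReal) (hT : 0 < T) (g : ℝ → ℝ) {s : Set ℝ} (hs : MeasurableSet s) :
    ∫ x in s, g x ∂(gaussianReal 0 T) = ∫ x in s, gaussianPDFReal 0 T x * g x := by
  rw [gaussianReal_of_var_ne_zero 0 hT.ne']
  have hd : gaussianPDF 0 T
      = fun x => ((Real.toNNReal (gaussianPDFReal 0 T x) : ℝ≥0) : ℝ≥0∞) := by
    ext x
    simp [gaussianPDF, ENNReal.ofReal]
  rw [hd, setIntegral_withDensity_eq_setIntegral_smul
    ((measurable_gaussianPDFReal 0 T).real_toNNReal) g hs]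
  refine setIntegral_congr_fun hs fun x _ => ?_
  simp [NNReal.smul_def, Real.coe_toNNReal _ (gaussianPDFReal_nonneg 0 T x)]

lemma exp_key (T : NNReal) (hT : 0 < T) (a c : ℝ) :
    ∫ w in Ici c, rexp (a * w) ∂(gaussianReal 0 T)
      = rexp (a ^ 2 * T / 2) * stdNormalCDF ((a * T - c) / Real.sqrt T) := by
  rw [gauss_setIntegral T hT _ measurableSet_Ici]
  simp_rw [pdf_mul_exp T hT a]
  rw [MeasureTheory.integral_const_mul, pdf_setIntegral T hT (a * T) c]

/-- The second moment of the European call payoff under the risk-neutral measure: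
`E[(max(0, S_T - K))²] = e^{(2r+σ²)T} S₀² Φ(d₃) - 2K e^{rT} S₀ Φ(d₁) + K² Φ(d₂)`. -/
theorem bsm_call_second_moment (T : NNReal) (hT : 0 < T) (σ S₀ K r : ℝ)
    (hσ : 0 < σ) (hS₀ : 0 < S₀) (hK : 0 < K) :
    ∫ w, (max 0 (S₀ * Real.exp (σ * w + (r - σ ^ 2 / 2) * T) - K)) ^ 2
        ∂(gaussianReal 0 T)
      = Real.exp ((2 * r + σ ^ 2) * T) * S₀ ^ 2 *
          stdNormalCDF ((1 / (σ * Real.sqrt T)) *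
            (Real.log (S₀ / K) + (r + 3 * σ ^ 2 / 2) * T))
        - 2 * K * Real.exp (r * T) * S₀ *
          stdNormalCDF ((1 / (σ * Real.sqrt T)) *
            (Real.log (S₀ / K) + (r + σ ^ 2 / 2) * T))
        + K ^ 2 *
          stdNormalCDF ((1 / (σ * Real.sqrt T)) *
            (Real.log (S₀ / K) + (r + σ ^ 2 / 2) * T) - σ * Real.sqrt T) := by
  have hT' : (0:ℝ) < T := hT
  have hsT : (0:ℝ) < Real.sqrt T := Real.sqrt_pos.mpr hT'
  set w₀ : ℝ := (Real.log (K / S₀) - (r - σ ^ 2 / 2) * T) / σ with hw₀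
  -- step 1: indicator form
  have hind : (fun w => (max 0 (S₀ * Real.exp (σ * w + (r - σ ^ 2 / 2) * (T:ℝ)) - K)) ^ 2)
      = Set.indicator (Ici w₀)
          (fun w => (S₀ * Real.exp (σ * w + (r - σ ^ 2 / 2) * (T:ℝ)) - K) ^ 2) := by
    ext w
    rcases le_or_gt w₀ w with h | h
    · rw [Set.indicator_of_mem (mem_Ici.mpr h) _]
      congr 1
      refine max_eq_right ?_
      rw [sub_nonneg]
      have h2 : Real.log (K / S₀) ≤ σ * w + (r - σ ^ 2 / 2) * T := by
        rw [hw₀, div_le_iff₀ hσ] at h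
        linarith
      calc K = S₀ * (K / S₀) := by field_simp
        _ = S₀ * rexp (Real.log (K / S₀)) := by rw [Real.exp_log (by positivity)]
        _ ≤ _ := mul_le_mul_of_nonneg_left (Real.exp_le_exp.mpr h2) hS₀.le
    · rw [Set.indicator_of_notMem (by simpa using not_le.mpr h) _]
      have h2 : σ * w + (r - σ ^ 2 / 2) * T < Real.log (K / S₀) := by
        rw [hw₀, lt_div_iff₀ hσ] at h
        linarith
      have h3 : S₀ * rexp (σ * w + (r - σ ^ 2 / 2) * (T:ℝ)) < K := by
        calc S₀ * rexp (σ * w + (r - σ ^ 2 / 2) * (T:ℝ))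
            < S₀ * rexp (Real.log (K / S₀)) :=
              (mul_lt_mul_iff_right₀ hS₀).mpr (Real.exp_lt_exp.mpr h2)
          _ = K := by rw [Real.exp_log (by positivity)]; field_simp
      rw [max_eq_left (by linarith)]
      norm_num
  rw [hind, integral_indicator measurableSet_Ici]
  -- step 2: expand the square
  have hpt : ∀ w, (S₀ * Real.exp (σ * w + (r - σ ^ 2 / 2) * (T:ℝ)) - K) ^ 2
      = S₀ ^ 2 * rexp (2 * ((r - σ ^ 2 / 2) * (T:ℝ))) * rexp ((2 * σ) * w)
        - 2 * K * S₀ * rexp ((r - σ ^ 2 / 2) * (T:ℝ)) * rexp (σ * w)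
        + K ^ 2 * rexp ((0:ℝ) * w) := by
    intro w
    have e1 : rexp (σ * w + (r - σ ^ 2 / 2) * (T:ℝ)) ^ 2
        = rexp (2 * ((r - σ ^ 2 / 2) * (T:ℝ))) * rexp ((2 * σ) * w) := by
      rw [sq, ← Real.exp_add, ← Real.exp_add]; congr 1; ring
    have e2 : rexp (σ * w + (r - σ ^ 2 / 2) * (T:ℝ))
        = rexp ((r - σ ^ 2 / 2) * (T:ℝ)) * rexp (σ * w) := by
      rw [← Real.exp_add]; congr 1; ring
    have e3 : rexp ((0:ℝ) * w) = 1 := by simp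
    linear_combination S₀ ^ 2 * e1 - 2 * K * S₀ * e2 - K ^ 2 * e3
  simp_rw [hpt]
  have h1 : IntegrableOn (fun w => S₀ ^ 2 * rexp (2 * ((r - σ ^ 2 / 2) * (T:ℝ)))
      * rexp ((2 * σ) * w)) (Ici w₀) (gaussianReal 0 T) :=
    ((integrable_exp_gauss T hT (2 * σ)).const_mul _).integrableOn
  have h2 : IntegrableOn (fun w => 2 * K * S₀ * rexp ((r - σ ^ 2 / 2) * (T:ℝ))
      * rexp (σ * w)) (Ici w₀) (gaussianReal 0 T) :=
    ((integrable_exp_gauss T hT σ).const_mul _).integrableOn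
  have h3 : IntegrableOn (fun w => K ^ 2 * rexp ((0:ℝ) * w)) (Ici w₀) (gaussianReal 0 T) :=
    ((integrable_exp_gauss T hT 0).const_mul _).integrableOn
  have h12 : IntegrableOn (fun w => S₀ ^ 2 * rexp (2 * ((r - σ ^ 2 / 2) * (T:ℝ)))
      * rexp ((2 * σ) * w) - 2 * K * S₀ * rexp ((r - σ ^ 2 / 2) * (T:ℝ))
      * rexp (σ * w)) (Ici w₀) (gaussianReal 0 T) := h1.sub h2
  rw [integral_add h12 h3, integral_sub h1 h2,
    MeasureTheory.integral_const_mul, MeasureTheory.integral_const_mul,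
    MeasureTheory.integral_const_mul,
    exp_key T hT (2 * σ) w₀, exp_key T hT σ w₀, exp_key T hT 0 w₀]
  -- step 3: algebra
  have hσw₀ : σ * w₀ = Real.log K - Real.log S₀ - (r - σ ^ 2 / 2) * T := by
    rw [hw₀, Real.log_div hK.ne' hS₀.ne']
    field_simp
  have hss : Real.sqrt T * Real.sqrt T = (T:ℝ) := Real.mul_self_sqrt hT'.le
  have hlog : Real.log (S₀ / K) = Real.log S₀ - Real.log K := Real.log_div hS₀.ne' hK.ne'
  have hlog2 : Real.log (K / S₀) = Real.log K - Real.log S₀ := Real.log_div hK.ne' hS₀.ne'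
  have ha1 : ((2 * σ) * (T:ℝ) - w₀) / Real.sqrt T
      = (1 / (σ * Real.sqrt T)) * (Real.log (S₀ / K) + (r + 3 * σ ^ 2 / 2) * T) := by
    rw [hw₀, hlog, hlog2]
    field_simp
    ring
  have ha2 : (σ * (T:ℝ) - w₀) / Real.sqrt T
      = (1 / (σ * Real.sqrt T)) * (Real.log (S₀ / K) + (r + σ ^ 2 / 2) * T) := by
    rw [hw₀, hlog, hlog2]
    field_simp
    ring
  have ha3 : ((0:ℝ) * (T:ℝ) - w₀) / Real.sqrt T
      = (1 / (σ * Real.sqrt T)) * (Real.log (S₀ / K) + (r + σ ^ 2 / 2) * T)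
        - σ * Real.sqrt T := by
    rw [hw₀, hlog, hlog2]
    field_simp
    linear_combination (2 * σ ^ 2) * hss
  rw [ha1, ha2, ha3]
  have hc1 : rexp (2 * ((r - σ ^ 2 / 2) * (T:ℝ))) * rexp ((2 * σ) ^ 2 * (T:ℝ) / 2)
      = rexp ((2 * r + σ ^ 2) * T) := by
    rw [← Real.exp_add]; congr 1; ring
  have hc2 : rexp ((r - σ ^ 2 / 2) * (T:ℝ)) * rexp (σ ^ 2 * (T:ℝ) / 2)
      = rexp (r * T) := by
    rw [← Real.exp_add]; congr 1; ring
  have hc3 : rexp ((0:ℝ) ^ 2 * (T:ℝ) / 2) = 1 := by norm_num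
  rw [hc3]
  linear_combination
    (stdNormalCDF ((1 / (σ * Real.sqrt T)) *
      (Real.log (S₀ / K) + (r + 3 * σ ^ 2 / 2) * T))) * S₀ ^ 2 * hc1
    - (stdNormalCDF ((1 / (σ * Real.sqrt T)) *
      (Real.log (S₀ / K) + (r + σ ^ 2 / 2) * T))) * (2 * K * S₀) * hc2
end

section
/- Let H be a finite-dimensional complex inner product space, and let χ and η be unit vectors in H whose inner product has modulus strictly between 0 and 1. Let θ ∈ (0, π) be defined by |⟨χ, η⟩| = cos(θ/2). Define the reflections U = Id − 2·P_χ and S = Id − 2·P_η, where P_χ and P_η are the orthogonal projections onto the lines spanned by χ and η respectively, and let Q = U·S. Then the two-dimensional subspace spanned by χ and η is invariant under Q, and there exist nonzero vectors ψ₊ and ψ₋ in span{χ, η} with Q·ψ₊ = e^{iθ}·ψ₊ and Q·ψ₋ = e^{−iθ}·ψ₋. -/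
/-!
On the plane spanned by `χ` and `η`, write `a = ⟪χ, η⟫`. Both reflections preserve the plane,
and a vector `(2a) χ + β η` is an eigenvector of `Q = U S` with eigenvalue `l` exactly when
`β = l + 1 - 4|a|²` and `(l + 1)² = 4|a|² l`. Since `e^{iθ} + 1 = 2 cos(θ/2) e^{iθ/2}`, the
eigenvalues `e^{±iθ}` solve this quadratic when `|a| = cos(θ/2)`, and the resulting vectors are
nonzero because `0 < |a| < 1`.
-/

open scoped InnerProductSpace

open Complex in
theorem Complex.sq_exp_mul_I_add_one (θ : ℂ) :
    (exp (θ * I) + 1) ^ 2 = 4 * cos (θ / 2) ^ 2 * exp (θ * I) := by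
  set w := exp (θ / 2 * I)
  have hw : exp (θ * I) = w ^ 2 := by rw [← exp_nat_mul]; ring_nf
  have inv : w * exp (-(θ / 2) * I) = 1 := by rw [← exp_add]; ring_nf; exact exp_zero
  rw [hw, cos]
  linear_combination (-(2 * w ^ 2 + 1 + w * exp (-(θ / 2) * I))) * inv

section Grover

variable {𝕜 E : Type*} [RCLike 𝕜] [NormedAddCommGroup E] [InnerProductSpace 𝕜 E]

variable (𝕜) in
/-- `Id - 2 P_v`; a reflection when `v` is a unit vector. -/
def lineReflection (v x : E) : E := x - (2 : 𝕜) • (⟪v, x⟫_𝕜 • v)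

theorem lineReflection_mem {K : Submodule 𝕜 E} {v x : E} (hv : v ∈ K) (hx : x ∈ K) :
    lineReflection 𝕜 v x ∈ K :=
  K.sub_mem hx (K.smul_mem _ (K.smul_mem _ hv))

variable (𝕜) in
def groverEigenvector (χ η : E) (l : 𝕜) : E :=
  (2 * ⟪χ, η⟫_𝕜) • χ + (l + 1 - 4 * (‖⟪χ, η⟫_𝕜‖ : 𝕜) ^ 2) • η

theorem groverEigenvector_mem_span (χ η : E) (l : 𝕜) :
    groverEigenvector 𝕜 χ η l ∈ Submodule.span 𝕜 {χ, η} :=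
  Submodule.add_mem _ (Submodule.smul_mem _ _ (Submodule.subset_span (by simp)))
    (Submodule.smul_mem _ _ (Submodule.subset_span (by simp)))

variable {χ η : E}

theorem groverEigenvector_ne_zero (hχ : ‖χ‖ = 1) (hη : ‖η‖ = 1) (l : 𝕜)
    (hne : ⟪χ, η⟫_𝕜 ≠ 0) (hlt : ‖⟪χ, η⟫_𝕜‖ < 1) :
    groverEigenvector 𝕜 χ η l ≠ 0 := by
  intro h
  have hηχ : ⟪η, χ⟫_𝕜 = starRingEnd 𝕜 ⟪χ, η⟫_𝕜 := (inner_conj_symm η χ).symm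
  have onχ := congrArg (⟪χ, ·⟫_𝕜) h
  have onη := congrArg (⟪η, ·⟫_𝕜) h
  simp only [groverEigenvector, inner_add_right, inner_smul_right, inner_zero_right,
    inner_self_eq_norm_sq_to_K, hχ, hη, hηχ, RCLike.ofReal_one, one_pow, mul_one] at onχ onη
  have hconj := RCLike.mul_conj ⟪χ, η⟫_𝕜
  have : ⟪χ, η⟫_𝕜 * (2 - 2 * (‖⟪χ, η⟫_𝕜‖ : 𝕜) ^ 2) = 0 := by
    linear_combination onχ - ⟪χ, η⟫_𝕜 * onη + 2 * ⟪χ, η⟫_𝕜 * hconj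
  have h1 : (‖⟪χ, η⟫_𝕜‖ : 𝕜) ^ 2 = 1 := by
    linear_combination ((mul_eq_zero.mp this).resolve_left hne) / (-2)
  norm_cast at h1
  nlinarith [norm_nonneg ⟪χ, η⟫_𝕜]

theorem lineReflection_lineReflection_groverEigenvector (hχ : ‖χ‖ = 1) (hη : ‖η‖ = 1) {l : 𝕜}
    (hl : (l + 1) ^ 2 = 4 * (‖⟪χ, η⟫_𝕜‖ : 𝕜) ^ 2 * l) :
    lineReflection 𝕜 χ (lineReflection 𝕜 η (groverEigenvector 𝕜 χ η l)) =
      l • groverEigenvector 𝕜 χ η l := by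
  have hχχ : ⟪χ, χ⟫_𝕜 = 1 := by simp [hχ]
  have hηη : ⟪η, η⟫_𝕜 = 1 := by simp [hη]
  have hηχ : ⟪η, χ⟫_𝕜 = starRingEnd 𝕜 ⟪χ, η⟫_𝕜 := (inner_conj_symm η χ).symm
  have hconj := RCLike.mul_conj ⟪χ, η⟫_𝕜
  simp only [lineReflection, groverEigenvector, inner_add_right, inner_sub_right,
    inner_smul_right, hχχ, hηη, hηχ]
  match_scalars
  · linear_combination (8 * ⟪χ, η⟫_𝕜) * hconj
  · linear_combination -4 * hconj - hl

end Grover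

theorem grover_iterate_eigenvalues_general {H : Type*} [NormedAddCommGroup H]
    [InnerProductSpace ℂ H]
    (χ η : H) (hχ : ‖χ‖ = 1) (hη : ‖η‖ = 1)
    (hlow : 0 < ‖(inner ℂ χ η : ℂ)‖)
    (hhigh : ‖(inner ℂ χ η : ℂ)‖ < 1)
    (θ : ℝ)
    (hθ : ‖(inner ℂ χ η : ℂ)‖ = Real.cos (θ / 2))
    (U S : H →ₗ[ℂ] H)
    (hU : ∀ x, U x = x - (2 : ℂ) • ((inner ℂ χ x : ℂ) • χ))
    (hS : ∀ x, S x = x - (2 : ℂ) • ((inner ℂ η x : ℂ) • η)) :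
    (∀ x ∈ Submodule.span ℂ ({χ, η} : Set H),
        U (S x) ∈ Submodule.span ℂ ({χ, η} : Set H))
    ∧ ∃ ψp ψm : H,
        ψp ∈ Submodule.span ℂ ({χ, η} : Set H)
        ∧ ψm ∈ Submodule.span ℂ ({χ, η} : Set H)
        ∧ ψp ≠ 0 ∧ ψm ≠ 0
        ∧ U (S ψp) = Complex.exp (θ * Complex.I) • ψp
        ∧ U (S ψm) = Complex.exp (-θ * Complex.I) • ψm := by
  have hQ (x : H) : U (S x) = lineReflection ℂ χ (lineReflection ℂ η x) := by
    rw [hU, hS]; rfl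
  have hχmem : χ ∈ Submodule.span ℂ ({χ, η} : Set H) := Submodule.subset_span (by simp)
  have hηmem : η ∈ Submodule.span ℂ ({χ, η} : Set H) := Submodule.subset_span (by simp)
  have hne : inner ℂ χ η ≠ 0 := norm_pos_iff.mp hlow
  have hcos : (‖(inner ℂ χ η : ℂ)‖ : ℂ) = Complex.cos (θ / 2) := by
    rw [hθ, Complex.ofReal_cos]; push_cast; rfl
  have eigen (l : ℂ) (hl : (l + 1) ^ 2 = 4 * Complex.cos (θ / 2) ^ 2 * l) :
      U (S (groverEigenvector ℂ χ η l)) = l • groverEigenvector ℂ χ η l := by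
    rw [← hcos] at hl
    rw [hQ, lineReflection_lineReflection_groverEigenvector hχ hη hl]
  refine ⟨fun x hx => hQ x ▸ lineReflection_mem hχmem (lineReflection_mem hηmem hx),
    groverEigenvector ℂ χ η (Complex.exp (θ * Complex.I)),
    groverEigenvector ℂ χ η (Complex.exp (-θ * Complex.I)),
    groverEigenvector_mem_span χ η _, groverEigenvector_mem_span χ η _,
    groverEigenvector_ne_zero hχ hη _ hne hhigh, groverEigenvector_ne_zero hχ hη _ hne hhigh,
    eigen _ (Complex.sq_exp_mul_I_add_one θ), eigen _ ?_⟩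
  simpa only [neg_div, Complex.cos_neg] using Complex.sq_exp_mul_I_add_one (-θ)

/-- The Grover iterate `Q = U S`, with `U` and `S` the reflections associated with the
unit vectors `χ` and `η` satisfying `|⟨χ, η⟩| = cos(θ/2)` for `θ ∈ (0, π)`, leaves the
span of `χ` and `η` invariant and has nonzero eigenvectors in this span with eigenvalues
`e^{±iθ}`. -/
theorem grover_iterate_eigenvalues {H : Type*} [NormedAddCommGroup H]
    [InnerProductSpace ℂ H] [FiniteDimensional ℂ H]
    (χ η : H) (hχ : ‖χ‖ = 1) (hη : ‖η‖ = 1)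
    (hlow : 0 < ‖(inner ℂ χ η : ℂ)‖)
    (hhigh : ‖(inner ℂ χ η : ℂ)‖ < 1)
    (θ : ℝ) (hθ0 : 0 < θ) (hθπ : θ < Real.pi)
    (hθ : ‖(inner ℂ χ η : ℂ)‖ = Real.cos (θ / 2))
    (U S : H →ₗ[ℂ] H)
    (hU : ∀ x, U x = x - (2 : ℂ) • ((inner ℂ χ x : ℂ) • χ))
    (hS : ∀ x, S x = x - (2 : ℂ) • ((inner ℂ η x : ℂ) • η)) :
    (∀ x ∈ Submodule.span ℂ ({χ, η} : Set H),
        U (S x) ∈ Submodule.span ℂ ({χ, η} : Set H))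
    ∧ ∃ ψp ψm : H,
        ψp ∈ Submodule.span ℂ ({χ, η} : Set H)
        ∧ ψm ∈ Submodule.span ℂ ({χ, η} : Set H)
        ∧ ψp ≠ 0 ∧ ψm ≠ 0
        ∧ U (S ψp) = Complex.exp (θ * Complex.I) • ψp
        ∧ U (S ψm) = Complex.exp (-θ * Complex.I) • ψm :=
  grover_iterate_eigenvalues_general χ η hχ hη hlow hhigh θ hθ U S hU hS
end

section
/- Let H be a finite-dimensional complex inner product space, and let χ and η be unit vectors in H whose inner product has modulus strictly between 0 and 1. Let θ ∈ (0, π) be defined by |⟨χ, η⟩| = cos(θ/2), and let Q = (Id − 2·P_χ)·(Id − 2·P_η), where P_χ and P_η are the orthogonal projections onto the lines spanned by χ and η. Then there exist vectors ψ₊ and ψ₋ with Q·ψ₊ = e^{iθ}·ψ₊, Q·ψ₋ = e^{−iθ}·ψ₋, ⟨ψ₊, ψ₋⟩ = 0, ‖ψ₊‖ = ‖ψ₋‖ = 1/√2, and χ = ψ₊ + ψ₋; that is, χ = (1/√2)(ψ₊' + ψ₋') is an equal-weight superposition of unit eigenvectors of Q with eigenvalues e^{±iθ}. -/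
/-- The state `χ` is an equal-weight superposition of eigenvectors of the Grover iterate
`Q = U S` with eigenvalues `e^{±iθ}`: there exist orthogonal vectors `ψ₊, ψ₋` of norm
`1/√2` with `Q ψ± = e^{±iθ} ψ±` and `χ = ψ₊ + ψ₋`. -/
theorem grover_state_decomposition {H : Type*} [NormedAddCommGroup H]
    [InnerProductSpace ℂ H] [FiniteDimensional ℂ H]
    (χ η : H) (hχ : ‖χ‖ = 1) (hη : ‖η‖ = 1)
    (hlow : 0 < ‖(inner ℂ χ η : ℂ)‖)
    (hhigh : ‖(inner ℂ χ η : ℂ)‖ < 1)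
    (θ : ℝ) (hθ0 : 0 < θ) (hθπ : θ < Real.pi)
    (hθ : ‖(inner ℂ χ η : ℂ)‖ = Real.cos (θ / 2))
    (U S : H →ₗ[ℂ] H)
    (hU : ∀ x, U x = x - (2 : ℂ) • ((inner ℂ χ x : ℂ) • χ))
    (hS : ∀ x, S x = x - (2 : ℂ) • ((inner ℂ η x : ℂ) • η)) :
    ∃ ψp ψm : H,
      U (S ψp) = Complex.exp (θ * Complex.I) • ψp
      ∧ U (S ψm) = Complex.exp (-θ * Complex.I) • ψm
      ∧ (inner ℂ ψp ψm : ℂ) = 0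
      ∧ ‖ψp‖ = 1 / Real.sqrt 2
      ∧ ‖ψm‖ = 1 / Real.sqrt 2
      ∧ χ = ψp + ψm := by
  obtain ⟨co, s, hco_pos, hs_pos, hcs, hcos2, hsin2⟩ :
      ∃ co s : ℝ, 0 < co ∧ 0 < s ∧ co ^ 2 + s ^ 2 = 1 ∧
        Real.cos θ = 1 - 2 * s ^ 2 ∧ Real.sin θ = 2 * s * co ∧
        ‖(inner ℂ χ η : ℂ)‖ = co := by
    refine ⟨Real.cos (θ / 2), Real.sin (θ / 2), ?_, ?_, Real.cos_sq_add_sin_sq _, ?_, ?_, hθ⟩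
    · rw [← hθ]; exact hlow
    · exact Real.sin_pos_of_pos_of_lt_pi (by linarith) (by linarith [Real.pi_pos])
    · have h := Real.cos_two_mul (θ / 2)
      have h2 : 2 * (θ / 2) = θ := by ring
      rw [h2] at h
      nlinarith [Real.cos_sq_add_sin_sq (θ / 2)]
    · have h := Real.sin_two_mul (θ / 2)
      have h2 : 2 * (θ / 2) = θ := by ring
      rw [h2] at h
      rw [h]
  obtain ⟨hsin2, habs⟩ := hsin2
  have hone : (co : ℂ) ^ 2 + (s : ℂ) ^ 2 = 1 := by exact_mod_cast congrArg Complex.ofReal hcs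
  have hco0 : (co : ℂ) ≠ 0 := by exact_mod_cast hco_pos.ne'
  have hs0 : (s : ℂ) ≠ 0 := by exact_mod_cast hs_pos.ne'
  have hχχ : (inner ℂ χ χ : ℂ) = 1 := by
    rw [inner_self_eq_norm_sq_to_K, hχ]; norm_num
  have hηη : (inner ℂ η η : ℂ) = 1 := by
    rw [inner_self_eq_norm_sq_to_K, hη]; norm_num
  have hcc : (inner ℂ χ η : ℂ) * (starRingEnd ℂ) (inner ℂ χ η : ℂ) = ((co : ℂ)) ^ 2 := by
    rw [Complex.mul_conj, ← Complex.sq_norm, habs]; push_cast; ring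
  -- abstract the phase p and the orthogonal unit vector u
  obtain ⟨u, hχu, huχ, huu, hηdec⟩ :
      ∃ u : H, (inner ℂ χ u : ℂ) = 0 ∧ (inner ℂ u χ : ℂ) = 0 ∧ (inner ℂ u u : ℂ) = 1 ∧
        ∃ p : ℂ, p * (starRingEnd ℂ) p = 1 ∧
          η = ((co : ℂ) * p) • χ + ((s : ℂ) * p) • u := by
    set c : ℂ := (inner ℂ χ η : ℂ) with hc
    set p : ℂ := c / (co : ℂ) with hpdef
    have hp : p * (starRingEnd ℂ) p = 1 := by
      rw [hpdef, map_div₀, Complex.conj_ofReal, div_mul_div_comm,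
        div_eq_one_iff_eq (mul_ne_zero hco0 hco0)]
      linear_combination hcc
    have hcp : c = (co : ℂ) * p := by rw [hpdef]; field_simp
    have hηχ : (inner ℂ η χ : ℂ) = (starRingEnd ℂ) c := by rw [← inner_conj_symm, hc]
    set v : H := η - c • χ with hv
    have hχv : (inner ℂ χ v : ℂ) = 0 := by
      simp [hv, inner_sub_right, inner_smul_right, hχχ, hc, hχ]
    have hηv : (inner ℂ η v : ℂ) = (s : ℂ) ^ 2 := by
      rw [hv, inner_sub_right, inner_smul_right, hηη, hηχ]
      linear_combination -hcc - hone + 2 * ((co : ℂ)^2 : ℂ) * (1 : ℂ) * (0 : ℂ) + (hcc + hone - hcc - hone)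
    have hvv : (inner ℂ v v : ℂ) = (s : ℂ) ^ 2 := by
      rw [hv, inner_sub_left, inner_smul_left, hχv, hηv]
      simp
    clear_value v p c
    refine ⟨((starRingEnd ℂ) p / (s : ℂ)) • v, ?_, ?_, ?_, p, hp, ?_⟩
    · simp [inner_smul_right, hχv]
    · rw [inner_smul_left]
      rw [← inner_conj_symm, hχv]
      simp
    · rw [inner_smul_left, inner_smul_right, hvv]
      rw [map_div₀, Complex.conj_conj, Complex.conj_ofReal]
      field_simp
      linear_combination hp
    · rw [smul_smul]
      have hscal : (s : ℂ) * p * ((starRingEnd ℂ) p / (s : ℂ)) = 1 := by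
        field_simp
        linear_combination hp
      rw [hscal, one_smul, hv, ← hcp]
      abel
  obtain ⟨p, hp, hηu⟩ := hηdec
  have hηχ' : (inner ℂ η χ : ℂ) = (co : ℂ) * (starRingEnd ℂ) p := by
    conv_lhs => rw [hηu]
    rw [inner_add_left, inner_smul_left, inner_smul_left, hχχ, huχ]
    simp [Complex.conj_ofReal]
  have hηu' : (inner ℂ η u : ℂ) = (s : ℂ) * (starRingEnd ℂ) p := by
    conv_lhs => rw [hηu]
    rw [inner_add_left, inner_smul_left, inner_smul_left, hχu, huu]
    simp [Complex.conj_ofReal]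
  -- action of Q = U ∘ S on χ and u
  have hQχ : U (S χ) = ((1 : ℂ) - 2 * (s : ℂ) ^ 2) • χ + (-(2 * (s : ℂ) * (co : ℂ))) • u := by
    rw [hS, hηχ', hU]
    conv_lhs => rw [hηu]
    simp only [inner_sub_right, inner_add_right, inner_smul_right, hχχ, hχu]
    match_scalars
    · linear_combination (2 * (co : ℂ)^2) * hp + 2 * hone
    · linear_combination (-(2 * (co : ℂ) * (s : ℂ))) * hp
  have hQu : U (S u) = (2 * (s : ℂ) * (co : ℂ)) • χ + ((1 : ℂ) - 2 * (s : ℂ) ^ 2) • u := by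
    rw [hS, hηu', hU]
    conv_lhs => rw [hηu]
    simp only [inner_sub_right, inner_add_right, inner_smul_right, hχχ, hχu]
    match_scalars
    · linear_combination (-(2 * (s : ℂ)^2)) * hp
    · linear_combination (2 * (co : ℂ) * (s : ℂ)) * hp
  have hexp : Complex.exp ((θ : ℂ) * Complex.I)
      = ((1 : ℂ) - 2 * (s : ℂ) ^ 2) + (2 * (s : ℂ) * (co : ℂ)) * Complex.I := by
    rw [Complex.exp_mul_I, ← Complex.ofReal_cos, ← Complex.ofReal_sin, hcos2, hsin2]
    push_cast; ring
  have hexp' : Complex.exp (-(θ : ℂ) * Complex.I)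
      = ((1 : ℂ) - 2 * (s : ℂ) ^ 2) - (2 * (s : ℂ) * (co : ℂ)) * Complex.I := by
    have h : (-(θ : ℂ)) = ((-θ : ℝ) : ℂ) := by push_cast; ring
    rw [h, Complex.exp_mul_I, ← Complex.ofReal_cos, ← Complex.ofReal_sin,
      Real.cos_neg, Real.sin_neg, hcos2, hsin2]
    push_cast; ring
  refine ⟨(1/2 : ℂ) • χ + (Complex.I / 2) • u, (1/2 : ℂ) • χ - (Complex.I / 2) • u,
    ?_, ?_, ?_, ?_, ?_, ?_⟩
  · rw [map_add, map_smul, map_smul, map_add, map_smul, map_smul, hQχ, hQu, hexp]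
    match_scalars
    · ring
    · linear_combination (-(s : ℂ) * (co : ℂ)) * Complex.I_sq
  · rw [map_sub, map_smul, map_smul, map_sub, map_smul, map_smul, hQχ, hQu, hexp']
    match_scalars
    · ring
    · linear_combination (-(s : ℂ) * (co : ℂ)) * Complex.I_sq
  · simp only [inner_add_left, inner_sub_right, inner_smul_left, inner_smul_right,
      hχχ, hχu, huχ, huu, Complex.conj_I, map_div₀, map_ofNat]
    norm_num
    linear_combination (1/4 : ℂ) * Complex.I_sq
  · have hin : (inner ℂ ((1/2 : ℂ) • χ + (Complex.I / 2) • u) ((1/2 : ℂ) • χ + (Complex.I / 2) • u) : ℂ) = 1/2 := by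
      simp only [inner_add_left, inner_add_right, inner_smul_left, inner_smul_right,
        hχχ, hχu, huχ, huu, map_div₀, Complex.conj_I, map_ofNat]
      norm_num
      linear_combination (-1/4 : ℂ) * Complex.I_sq
    have h2 : ‖(1/2 : ℂ) • χ + (Complex.I / 2) • u‖ ^ 2 = 1/2 := by
      rw [← inner_self_eq_norm_sq (𝕜 := ℂ), hin]
      norm_num
    have h3 : ‖(1/2 : ℂ) • χ + (Complex.I / 2) • u‖ = Real.sqrt (1/2) := by
      rw [← h2, Real.sqrt_sq (norm_nonneg _)]
    rw [h3, one_div, Real.sqrt_inv, one_div]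
  · have hin : (inner ℂ ((1/2 : ℂ) • χ - (Complex.I / 2) • u) ((1/2 : ℂ) • χ - (Complex.I / 2) • u) : ℂ) = 1/2 := by
      simp only [inner_sub_left, inner_sub_right, inner_smul_left, inner_smul_right,
        hχχ, hχu, huχ, huu, map_div₀, Complex.conj_I, map_ofNat]
      norm_num
      linear_combination (-1/4 : ℂ) * Complex.I_sq
    have h2 : ‖(1/2 : ℂ) • χ - (Complex.I / 2) • u‖ ^ 2 = 1/2 := by
      rw [← inner_self_eq_norm_sq (𝕜 := ℂ), hin]
      norm_num
    have h3 : ‖(1/2 : ℂ) • χ - (Complex.I / 2) • u‖ = Real.sqrt (1/2) := by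
      rw [← h2, Real.sqrt_sq (norm_nonneg _)]
    rw [h3, one_div, Real.sqrt_inv, one_div]
  · module
end

section
/- Let m be a natural number and let δ be a real number with |δ| ≤ 1/2^{m+1}. Then the phase-estimation success probability obeys the lower bound (1/4^{m}) · | ∑_{y=0}^{2^{m}−1} e^{2πiδy} |² ≥ 4/π². -/
open Finset

lemma my_abs_sin_le (x : ℝ) : |Real.sin x| ≤ |x| := by
  wlog h : 0 ≤ x generalizing x
  · have h2 := this (-x) (by linarith [lt_of_not_ge h])
    rw [Real.sin_neg, abs_neg, abs_neg] at h2
    exact h2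
  rw [abs_of_nonneg h]
  rcases le_total 1 x with h1 | h1
  · exact (Real.abs_sin_le_one x).trans h1
  · rw [abs_of_nonneg (Real.sin_nonneg_of_nonneg_of_le_pi h
      (h1.trans (by linarith [Real.pi_gt_three])))]
    exact Real.sin_le h

lemma my_abs_exp_sub_one (x : ℝ) :
    ‖Complex.exp (x * Complex.I) - 1‖ = 2 * |Real.sin (x / 2)| := by
  have key : Complex.exp ((x : ℂ) * Complex.I) - 1 =
      Complex.exp ((x / 2 : ℝ) * Complex.I) * (2 * Complex.I * Complex.sin ((x / 2 : ℝ))) := by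
    rw [Complex.sin]
    have h1 : Complex.exp ((x / 2 : ℝ) * Complex.I) * Complex.exp ((x / 2 : ℝ) * Complex.I)
        = Complex.exp ((x : ℂ) * Complex.I) := by
      rw [← Complex.exp_add]; push_cast; ring_nf
    have h2 : Complex.exp ((x / 2 : ℝ) * Complex.I) * Complex.exp (-((x / 2 : ℝ)) * Complex.I)
        = 1 := by
      rw [← Complex.exp_add]; rw [show ((x/2:ℝ):ℂ) * Complex.I + -((x/2:ℝ):ℂ) * Complex.I = 0 by ring, Complex.exp_zero]
    calc Complex.exp ((x : ℂ) * Complex.I) - 1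
        = Complex.exp ((x / 2 : ℝ) * Complex.I) * Complex.exp ((x / 2 : ℝ) * Complex.I)
          - Complex.exp ((x / 2 : ℝ) * Complex.I) * Complex.exp (-((x / 2 : ℝ)) * Complex.I) := by
          rw [h1, h2]
      _ = _ := by
          rw [show (2 : ℂ) * Complex.I *
            ((Complex.exp (-((x/2:ℝ):ℂ) * Complex.I) - Complex.exp (((x/2:ℝ):ℂ) * Complex.I)) * Complex.I / 2)
            = Complex.exp (((x/2:ℝ):ℂ) * Complex.I) - Complex.exp (-((x/2:ℝ):ℂ) * Complex.I) by
              have : Complex.I * Complex.I = -1 := Complex.I_mul_I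
              field_simp; ring_nf; rw [Complex.I_sq]; ring]
          ring
  rw [key]
  rw [norm_mul, Complex.norm_exp_ofReal_mul_I]
  rw [norm_mul, norm_mul, Complex.norm_two, Complex.norm_I, ← Complex.ofReal_sin, Complex.norm_real, Real.norm_eq_abs]
  ring

lemma my_abs_sin_abs (x : ℝ) : |Real.sin (|x|)| = |Real.sin x| := by
  rcases abs_choice x with h | h <;> rw [h] <;> simp [Real.sin_neg]

/-- Lower bound on the phase-estimation success probability: if the residual `δ` satisfies
`|δ| ≤ 1/2^(m+1)`, then `(1/4^m) |∑_{y<2^m} e^{2πiδy}|² ≥ 4/π²`. -/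
theorem phase_estimation_success_probability (m : ℕ) (δ : ℝ)
    (hδ : |δ| ≤ 1 / 2 ^ (m + 1)) :
    4 / Real.pi ^ 2 ≤
      (1 / 4 ^ m) *
        ‖(∑ y ∈ Finset.range (2 ^ m),
          Complex.exp (2 * Real.pi * Complex.I * δ * y))‖ ^ 2 := by
  have hπ := Real.pi_pos
  rcases eq_or_ne δ 0 with rfl | hδ0
  · simp only [Complex.ofReal_zero, mul_zero, zero_mul, Complex.exp_zero, sum_const,
      card_range, nsmul_eq_mul, mul_one]
    rw [Complex.norm_natCast]
    have h1 : ((2:ℝ) ^ m) ^ 2 = 4 ^ m := by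
      rw [← pow_mul, pow_mul']; norm_num
    push_cast
    rw [h1]
    rw [div_le_iff₀ (by positivity)]
    have h4 : (4:ℝ) ≤ Real.pi ^ 2 := by nlinarith [Real.pi_gt_three]
    have : (0:ℝ) < 4 ^ m := by positivity
    calc (4:ℝ) ≤ Real.pi ^ 2 := h4
      _ = 1 / 4 ^ m * 4 ^ m * Real.pi ^ 2 := by field_simp
  · set z : ℂ := Complex.exp (2 * Real.pi * Complex.I * δ) with hz
    have h2πI : (2 * (Real.pi : ℂ) * Complex.I) ≠ 0 := by
      simp [Real.pi_ne_zero, Complex.I_ne_zero]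
    have hzne : z ≠ 1 := by
      intro h
      rw [hz, Complex.exp_eq_one_iff] at h
      obtain ⟨n, hn⟩ := h
      have hδn : (δ : ℂ) = (n : ℂ) := by
        have : (δ : ℂ) * (2 * (Real.pi : ℂ) * Complex.I)
            = (n : ℂ) * (2 * (Real.pi : ℂ) * Complex.I) := by
          rw [← hn]; ring
        exact mul_right_cancel₀ h2πI this
      have hδn' : δ = (n : ℝ) := by exact_mod_cast hδn
      have hn0 : n ≠ 0 := by
        intro h0; apply hδ0; rw [hδn', h0]; simp
      have h1 : (1:ℝ) ≤ |δ| := by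
        rw [hδn']
        exact_mod_cast Int.one_le_abs hn0
      have h2m : (2:ℝ) ≤ 2^(m+1) := by
        calc (2:ℝ) = 2^1 := by norm_num
          _ ≤ 2^(m+1) := pow_le_pow_right₀ one_le_two (by omega)
      have h2 : (1:ℝ)/2^(m+1) ≤ 1/2 :=
        div_le_div_of_nonneg_left (by norm_num) (by norm_num) h2m
      linarith
    have hterm : ∀ y ∈ Finset.range (2 ^ m),
        Complex.exp (2 * Real.pi * Complex.I * δ * y) = z ^ y := by
      intro y _
      rw [hz, ← Complex.exp_nat_mul]
      congr 1; ring
    rw [Finset.sum_congr rfl hterm, geom_sum_eq hzne, norm_div]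
    have hnum : z ^ 2 ^ m = Complex.exp (((2 * Real.pi * δ * 2 ^ m : ℝ) : ℂ) * Complex.I) := by
      rw [hz, ← Complex.exp_nat_mul]
      congr 1; push_cast; ring
    have hden : z = Complex.exp (((2 * Real.pi * δ : ℝ) : ℂ) * Complex.I) := by
      rw [hz]; congr 1; push_cast; ring
    rw [hnum, hden, my_abs_exp_sub_one, my_abs_exp_sub_one]
    have e1 : 2 * Real.pi * δ * 2 ^ m / 2 = Real.pi * δ * 2 ^ m := by ring
    have e2 : 2 * Real.pi * δ / 2 = Real.pi * δ := by ring
    rw [e1, e2]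
    -- bounds
    have hδpos : 0 < |δ| := abs_pos.mpr hδ0
    have hδ2 : |δ| * 2 ^ m ≤ 1 / 2 := by
      have : (2:ℝ) ^ (m+1) = 2 ^ m * 2 := by ring
      rw [this] at hδ
      rw [div_mul_eq_div_div] at hδ
      have h2m : (0:ℝ) < 2 ^ m := by positivity
      calc |δ| * 2 ^ m ≤ (1 / 2 ^ m / 2) * 2 ^ m := by
            apply mul_le_mul_of_nonneg_right hδ h2m.le
        _ = 1 / 2 := by field_simp
    have hsin_den : |Real.sin (Real.pi * δ)| ≤ Real.pi * |δ| := by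
      calc |Real.sin (Real.pi * δ)| ≤ |Real.pi * δ| := my_abs_sin_le _
        _ = Real.pi * |δ| := by rw [abs_mul, abs_of_pos hπ]
    have harg : |Real.pi * δ * 2 ^ m| = Real.pi * |δ| * 2 ^ m := by
      rw [abs_mul, abs_mul, abs_of_pos hπ, abs_of_pos (show (0:ℝ) < 2^m by positivity)]
    have hargle : Real.pi * |δ| * 2 ^ m ≤ Real.pi / 2 := by
      calc Real.pi * |δ| * 2 ^ m = Real.pi * (|δ| * 2 ^ m) := by ring
        _ ≤ Real.pi * (1/2) := by
            exact mul_le_mul_of_nonneg_left hδ2 hπ.le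
        _ = Real.pi / 2 := by ring
    have hsin_num : 2 * |δ| * 2 ^ m ≤ |Real.sin (Real.pi * δ * 2 ^ m)| := by
      have habs : |Real.sin (Real.pi * δ * 2 ^ m)| = Real.sin (Real.pi * |δ| * 2 ^ m) := by
        have h1 : Real.sin (Real.pi * |δ| * 2 ^ m) = Real.sin |Real.pi * δ * 2 ^ m| := by
          rw [harg]
        have h2 : 0 ≤ Real.sin |Real.pi * δ * 2 ^ m| :=
          Real.sin_nonneg_of_nonneg_of_le_pi (abs_nonneg _) (by rw [harg]; linarith)
        rw [h1, ← my_abs_sin_abs]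
        exact abs_of_nonneg h2
      rw [habs]
      have := Real.mul_le_sin (x := Real.pi * |δ| * 2 ^ m) (by positivity) hargle
      calc 2 * |δ| * 2 ^ m = 2 / Real.pi * (Real.pi * |δ| * 2 ^ m) := by
            field_simp
        _ ≤ Real.sin (Real.pi * |δ| * 2 ^ m) := this
    have hden_pos : 0 < |Real.sin (Real.pi * δ)| := by
      rw [abs_pos]
      intro h
      rcases Real.sin_eq_zero_iff.mp h with ⟨n, hn⟩
      have hn' : δ = n := by
        have := mul_right_cancel₀ (ne_of_gt hπ) (by linarith [hn] : (n:ℝ) * Real.pi = δ * Real.pi)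
        exact this.symm
      have hn0 : n ≠ 0 := by intro h0; apply hδ0; rw [hn', h0]; simp
      have h1 : (1:ℝ) ≤ |δ| := by
        rw [hn']
        exact_mod_cast Int.one_le_abs hn0
      have h2m : (2:ℝ) ≤ 2^(m+1) := by
        calc (2:ℝ) = 2^1 := by norm_num
          _ ≤ 2^(m+1) := pow_le_pow_right₀ one_le_two (by omega)
      have : (1:ℝ)/2^(m+1) ≤ 1/2 := by
        apply div_le_div_of_nonneg_left (by norm_num) (by norm_num) h2m
      linarith
    -- combine
    have hS : 2 * 2 ^ m / Real.pi ≤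
        2 * |Real.sin (Real.pi * δ * 2 ^ m)| / (2 * |Real.sin (Real.pi * δ)|) := by
      rw [div_le_div_iff₀ hπ (by positivity)]
      calc 2 * 2 ^ m * (2 * |Real.sin (Real.pi * δ)|)
          ≤ 2 * 2 ^ m * (2 * (Real.pi * |δ|)) := by
            apply mul_le_mul_of_nonneg_left _ (by positivity)
            linarith
        _ = 2 * (2 * |δ| * 2 ^ m) * Real.pi := by ring
        _ ≤ 2 * |Real.sin (Real.pi * δ * 2 ^ m)| * Real.pi := by
            apply mul_le_mul_of_nonneg_right _ hπ.le
            linarith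
    have hSpos : 0 < 2 * 2 ^ m / Real.pi := by positivity
    set S := 2 * |Real.sin (Real.pi * δ * 2 ^ m)| / (2 * |Real.sin (Real.pi * δ)|)
    have hsq : (2 * 2 ^ m / Real.pi) ^ 2 ≤ S ^ 2 := by
      apply pow_le_pow_left₀ hSpos.le hS
    have hkey : (2 * (2:ℝ) ^ m / Real.pi) ^ 2 = 4 * 4 ^ m / Real.pi ^ 2 := by
      rw [div_pow]
      congr 1
      rw [mul_pow, ← pow_mul, pow_mul']
      norm_num
    rw [hkey] at hsq
    have h4m : (0:ℝ) < 4 ^ m := by positivity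
    calc 4 / Real.pi ^ 2 = 1 / 4 ^ m * (4 * 4 ^ m / Real.pi ^ 2) := by field_simp
      _ ≤ 1 / 4 ^ m * S ^ 2 := by
          apply mul_le_mul_of_nonneg_left hsq (by positivity)
end

section
/- Let θ, θ̂, ε be real numbers with 0 ≤ θ, 0 ≤ θ̂ ≤ π − ε/2, |θ̂ − θ| ≤ ε, and 0 < ε ≤ 1. Then the error in the corresponding cosine estimates satisfies | cos(θ̂/2) − cos(θ/2) | ≤ | cos((θ̂ + ε)/2) − cos(θ̂/2) |. -/
/-!
Write `a = θ̂/2`, `s = θ/2`, `t = ε/2`, so `|s - a| ≤ t`, `0 ≤ a ≤ π/2` and `a + t ≤ π`.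
Since `|s| ≤ a + t ≤ π`, monotonicity of `cos` on `[0, π]` gives `cos (a + t) ≤ cos s`.
For the other direction, sum-to-product writes `cos s + cos (a + t)` as `2 cos m cos d` with
`m ∈ [a, a + t]` and `|d| ≤ t ≤ π/2`, so `cos m ≤ cos a`, `0 ≤ cos d ≤ 1`, and hence
`cos s + cos (a + t) ≤ 2 cos a`.
-/

open Real

namespace Real

variable {a s t : ℝ}

theorem cos_add_le_cos_of_abs_sub_le (ha : 0 ≤ a) (hat : a + t ≤ π) (hs : |s - a| ≤ t) :
    cos (a + t) ≤ cos s := by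
  obtain ⟨hs_lo, hs_hi⟩ := abs_le.mp hs
  have habs : |s| ≤ a + t := abs_le.mpr ⟨by linarith, by linarith⟩
  rw [← cos_abs s]
  exact cos_le_cos_of_nonneg_of_le_pi (abs_nonneg s) hat habs

theorem cos_add_cos_add_le_two_mul_cos (ha : 0 ≤ a) (ha' : a ≤ π / 2) (hat : a + t ≤ π)
    (ht : t ≤ π / 2) (hs : |s - a| ≤ t) :
    cos s + cos (a + t) ≤ 2 * cos a := by
  obtain ⟨hs_lo, hs_hi⟩ := abs_le.mp hs
  have hcos_m : cos ((s + (a + t)) / 2) ≤ cos a :=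
    cos_le_cos_of_nonneg_of_le_pi ha (by linarith) (by linarith)
  have hcos_d_nonneg : 0 ≤ cos ((s - (a + t)) / 2) :=
    cos_nonneg_of_mem_Icc ⟨by linarith, by linarith⟩
  have hcos_a_nonneg : 0 ≤ cos a := cos_nonneg_of_mem_Icc ⟨by linarith, ha'⟩
  rw [cos_add_cos]
  -- `cos a - cos m * cos d = (cos a - cos m) * cos d + cos a * (1 - cos d)`
  nlinarith [mul_nonneg (sub_nonneg.mpr hcos_m) hcos_d_nonneg,
    mul_nonneg hcos_a_nonneg (sub_nonneg.mpr (cos_le_one ((s - (a + t)) / 2)))]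

theorem abs_cos_sub_cos_le_of_abs_sub_le (ha : 0 ≤ a) (ha' : a ≤ π / 2) (hat : a + t ≤ π)
    (ht : t ≤ π / 2) (hs : |s - a| ≤ t) :
    |cos a - cos s| ≤ cos a - cos (a + t) := by
  have hlower := cos_add_le_cos_of_abs_sub_le ha hat hs
  have hupper := cos_add_cos_add_le_two_mul_cos ha ha' hat ht hs
  exact abs_le.mpr ⟨by linarith, by linarith⟩

end Real

theorem cosine_estimate_error_general (θ θhat ε : ℝ)
    (hθhat0 : 0 ≤ θhat) (hθhatπ : θhat ≤ Real.pi - ε / 2)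
    (hclose : |θhat - θ| ≤ ε) (hε0 : 0 < ε) (hε1 : ε ≤ 1) :
    |Real.cos (θhat / 2) - Real.cos (θ / 2)|
      ≤ |Real.cos ((θhat + ε) / 2) - Real.cos (θhat / 2)| := by
  have hπ := pi_gt_three
  have hhalf : |θ / 2 - θhat / 2| ≤ ε / 2 := by
    rw [← sub_div, abs_div, abs_two, abs_sub_comm]
    linarith
  have key := abs_cos_sub_cos_le_of_abs_sub_le (a := θhat / 2) (by linarith) (by linarith)
    (by linarith) (by linarith) hhalf
  rw [add_div, abs_sub_comm (cos (θhat / 2 + ε / 2))]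
  exact key.trans (le_abs_self _)

/-- Error bound for the expectation value recovered from an estimated phase: if
`|θ̂ - θ| ≤ ε` with `0 ≤ θ`, `0 ≤ θ̂ ≤ π - ε/2` and `0 < ε ≤ 1`, then
`|cos(θ̂/2) - cos(θ/2)| ≤ |cos((θ̂+ε)/2) - cos(θ̂/2)|`. -/
theorem cosine_estimate_error (θ θhat ε : ℝ)
    (hθ : 0 ≤ θ) (hθhat0 : 0 ≤ θhat) (hθhatπ : θhat ≤ Real.pi - ε / 2)
    (hclose : |θhat - θ| ≤ ε) (hε0 : 0 < ε) (hε1 : ε ≤ 1) :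
    |Real.cos (θhat / 2) - Real.cos (θ / 2)|
      ≤ |Real.cos ((θhat + ε) / 2) - Real.cos (θhat / 2)| :=
  cosine_estimate_error_general θ θhat ε hθhat0 hθhatπ hclose hε0 hε1
end
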